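/- arXiv:1111.4635 — 8 statements merged into one kernel-verified Lean document; each statement's English description precedes it below -/
import Mathlib

section
/- Let f : ℤ₂ → ℤ₂ be a 1-Lipschitz transitive map and let g : ℤ₂ → ℤ₂ be a derivative of f modulo 4 with parameter N. Then for every x₀ ∈ ℤ₂ there exists a sequence y : ℕ → ℤ/2ℤ, periodic with period 2^N, such that for every n ≥ N + 1 and every i ≥ 0 the following identity holds in ℤ/2ℤ: δ_n(f^[i+2^(n−1)](x₀)) = δ_{n−1}(f^[i](x₀)) + δ_n(f^[i](x₀)) + δ_{n−1}(x₀) + δ_n(x₀) + δ_n(f^[2^(n−1)](x₀)) + y(i). (In particular the sequence y does not depend on n.) -/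
open Function Finset

/-- `a ≡ b (mod 2^s)` in the 2-adic integers. -/
def CongMod (s : ℕ) (a b : ℤ_[2]) : Prop := ‖a - b‖ ≤ ((2 : ℝ) ^ s)⁻¹

/-- `f` is 1-Lipschitz for the 2-adic norm (a T-function). -/
def OneLip (f : ℤ_[2] → ℤ_[2]) : Prop := ∀ a b : ℤ_[2], ‖f a - f b‖ ≤ ‖a - b‖

/-- `f` is transitive modulo `2^n`. -/
def TransMod (f : ℤ_[2] → ℤ_[2]) (n : ℕ) : Prop :=
  ∀ x y : ℤ_[2], ∃ i < 2 ^ n, CongMod n (f^[i] x) y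

/-- `f` is transitive (single cycle modulo every power of 2). -/
def TransitiveT (f : ℤ_[2] → ℤ_[2]) : Prop := ∀ n : ℕ, 1 ≤ n → TransMod f n

/-- `f` is bijective modulo `2^n`. -/
def BijMod (f : ℤ_[2] → ℤ_[2]) (n : ℕ) : Prop :=
  (∀ a b : ℤ_[2], CongMod n (f a) (f b) → CongMod n a b) ∧
  (∀ y : ℤ_[2], ∃ x : ℤ_[2], CongMod n (f x) y)

/-- `f` is bijective (measure-preserving T-function). -/
def BijectiveT (f : ℤ_[2] → ℤ_[2]) : Prop := ∀ n : ℕ, 1 ≤ n → BijMod f n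

/-- `g` is a derivative of `f` modulo `2^M` with parameter `K`. -/
def IsDerivMod (f g : ℤ_[2] → ℤ_[2]) (M K : ℕ) : Prop :=
  ∀ x h : ℤ_[2], ‖h‖ ≤ ((2 : ℝ) ^ K)⁻¹ →
    ‖f (x + h) - f x - g x * h‖ ≤ ((2 : ℝ) ^ M)⁻¹ * ‖h‖

/-- The `n`-th binary digit of a 2-adic integer, as an element of `ZMod 2`.
`PadicInt.appr x n` is the unique integer in `{0, …, 2^n - 1}` congruent to `x` mod `2^n`. -/
noncomputable def delta (n : ℕ) (x : ℤ_[2]) : ZMod 2 :=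
  (((x.appr (n + 1) - x.appr n) / 2 ^ n : ℕ) : ZMod 2)

/-! Write `D_m(i) = f^[i + 2^m] x₀ - f^[i] x₀`. A transitive 1-Lipschitz `f` induces a single
cycle of length `2^s` on `ℤ/2^s`, so `D_m(i) = 2^m u_i` with `u_i` odd. Adding `2^m u_i` to
`f^[i] x₀` flips digit `m` and changes digit `m + 1` by the carry `δ_m(f^[i] x₀)` plus `δ_1(u_i)`.
For `m ≥ N` the derivative condition gives `u_{i+1} ≡ g(f^[i] x₀) u_i (mod 4)`, hence
`δ_1(u_i) = δ_1(u_0) + ∑_{j<i} δ_1(g(f^[j] x₀))`, and this sum is `y i`, independent of `m`.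
It has period `2^N` because `D_N(i) + D_N(i + 2^N) = D_{N+1}(i)` is `2^(N+1)` times an odd
number, which forces the odd parts of the two summands to have equal digit `1`. -/

lemma two_pow_dvd_iff_norm_le {s : ℕ} {z : ℤ_[2]} :
    (2 : ℤ_[2]) ^ s ∣ z ↔ ‖z‖ ≤ ((2 : ℝ) ^ s)⁻¹ := by
  rw [← zpow_natCast, ← zpow_neg, show (2 : ℝ) = ((2 : ℕ) : ℝ) by norm_num,
    PadicInt.norm_le_pow_iff_mem_span_pow, Ideal.mem_span_singleton, Nat.cast_ofNat]

lemma toZModPow_eq_iff_two_pow_dvd_sub {s : ℕ} {a b : ℤ_[2]} :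
    PadicInt.toZModPow s a = PadicInt.toZModPow s b ↔ (2 : ℤ_[2]) ^ s ∣ a - b := by
  rw [← sub_eq_zero, ← map_sub, ← RingHom.mem_ker, PadicInt.ker_toZModPow,
    Ideal.mem_span_singleton, Nat.cast_ofNat]

lemma appr_eq_mod_of_two_pow_dvd_sub {k r : ℕ} {x : ℤ_[2]} (h : (2 : ℤ_[2]) ^ k ∣ x - r) :
    x.appr k = r % 2 ^ k := by
  rw [← toZModPow_eq_iff_two_pow_dvd_sub, map_natCast] at h
  rw [← ZMod.val_natCast, ← h]
  exact (ZMod.val_cast_of_lt (PadicInt.appr_lt x k)).symm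

lemma exists_two_pow_dvd_sub_natCast (k : ℕ) (x : ℤ_[2]) : ∃ r : ℕ, (2 : ℤ_[2]) ^ k ∣ x - r :=
  ⟨x.appr k, by simpa [Ideal.mem_span_singleton] using PadicInt.appr_spec k x⟩

lemma exists_odd_two_pow_dvd_sub_natCast {k : ℕ} (hk : k ≠ 0) {u : ℤ_[2]} (hu : ¬ 2 ∣ u) :
    ∃ r : ℕ, r % 2 = 1 ∧ (2 : ℤ_[2]) ^ k ∣ u - r := by
  obtain ⟨r, hr⟩ := exists_two_pow_dvd_sub_natCast k u
  refine ⟨r, Nat.two_dvd_ne_zero.mp fun hr2 => hu ?_, hr⟩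
  have h2r : (2 : ℤ_[2]) ∣ r := by exact_mod_cast (Nat.cast_dvd_cast hr2 : ((2 : ℕ) : ℤ_[2]) ∣ r)
  simpa using dvd_add ((dvd_pow_self 2 hk).trans hr) h2r

lemma delta_eq_of_two_pow_dvd_sub {m r : ℕ} {x : ℤ_[2]} (h : (2 : ℤ_[2]) ^ (m + 1) ∣ x - r) :
    delta m x = ((r / 2 ^ m : ℕ) : ZMod 2) := by
  have hm : (2 : ℤ_[2]) ^ m ∣ x - r := (pow_dvd_pow 2 m.le_succ).trans h
  rw [delta, appr_eq_mod_of_two_pow_dvd_sub h, appr_eq_mod_of_two_pow_dvd_sub hm, Nat.mod_pow_succ,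
    add_tsub_cancel_left, Nat.mul_div_cancel_left _ (by positivity), ZMod.natCast_mod]

lemma delta_congr {m : ℕ} {x y : ℤ_[2]} (h : (2 : ℤ_[2]) ^ (m + 1) ∣ x - y) :
    delta m x = delta m y := by
  obtain ⟨r, hr⟩ := exists_two_pow_dvd_sub_natCast (m + 1) y
  rw [delta_eq_of_two_pow_dvd_sub hr, delta_eq_of_two_pow_dvd_sub (by simpa using dvd_add h hr)]

lemma delta_two_pow_mul (m k : ℕ) (u : ℤ_[2]) : delta (m + k) (2 ^ m * u) = delta k u := by
  obtain ⟨r, hr⟩ := exists_two_pow_dvd_sub_natCast (k + 1) u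
  have hr' : (2 : ℤ_[2]) ^ (m + k + 1) ∣ 2 ^ m * u - (2 ^ m * r : ℕ) := by
    rw [add_assoc, pow_add, Nat.cast_mul, Nat.cast_pow, Nat.cast_ofNat, ← mul_sub]
    exact mul_dvd_mul_left _ hr
  rw [delta_eq_of_two_pow_dvd_sub hr, delta_eq_of_two_pow_dvd_sub hr', pow_add,
    Nat.mul_div_mul_left _ _ (by positivity)]

lemma delta_zero_of_not_two_dvd {u : ℤ_[2]} (hu : ¬ 2 ∣ u) : delta 0 u = 1 := by
  obtain ⟨r, hr, hur⟩ := exists_odd_two_pow_dvd_sub_natCast one_ne_zero hu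
  rw [delta_eq_of_two_pow_dvd_sub hur, pow_zero, Nat.div_one, ← ZMod.natCast_mod, hr, Nat.cast_one]

lemma delta_succ_add_two_pow_mul {m : ℕ} (x : ℤ_[2]) {u : ℤ_[2]} (hu : ¬ 2 ∣ u) :
    delta (m + 1) (x + 2 ^ m * u) = delta (m + 1) x + delta m x + delta 1 u := by
  obtain ⟨r, hr⟩ := exists_two_pow_dvd_sub_natCast (m + 2) x
  obtain ⟨t, ht, hut⟩ := exists_odd_two_pow_dvd_sub_natCast two_ne_zero hu
  have hsum : (2 : ℤ_[2]) ^ (m + 2) ∣ x + 2 ^ m * u - (r + 2 ^ m * t : ℕ) := by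
    have : x + 2 ^ m * u - (r + 2 ^ m * t : ℕ) = (x - r) + 2 ^ m * (u - t) := by push_cast; ring
    rw [this]
    exact dvd_add hr (by rw [pow_add]; exact mul_dvd_mul_left _ hut)
  have hr' : (2 : ℤ_[2]) ^ (m + 1) ∣ x - r := (pow_dvd_pow 2 (by omega)).trans hr
  have hut' : (2 : ℤ_[2]) ^ (1 + 1) ∣ u - t := hut
  rw [delta_eq_of_two_pow_dvd_sub hsum, delta_eq_of_two_pow_dvd_sub hr,
    delta_eq_of_two_pow_dvd_sub hr', delta_eq_of_two_pow_dvd_sub hut', pow_succ,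
    ← Nat.div_div_eq_div_mul, ← Nat.div_div_eq_div_mul, Nat.add_mul_div_left _ _ (by positivity)]
  -- `t` is odd, so the carry out of digit `m` is `q % 2`
  generalize r / 2 ^ m = q
  rw [← Nat.cast_add, ← Nat.cast_add, pow_one, ZMod.natCast_eq_natCast_iff']
  omega

lemma delta_one_mul {u w : ℤ_[2]} (hu : ¬ 2 ∣ u) (hw : ¬ 2 ∣ w) :
    delta 1 (u * w) = delta 1 u + delta 1 w := by
  obtain ⟨a, ha, hua⟩ := exists_odd_two_pow_dvd_sub_natCast two_ne_zero hu
  obtain ⟨b, hb, hwb⟩ := exists_odd_two_pow_dvd_sub_natCast two_ne_zero hw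
  have hab : (2 : ℤ_[2]) ^ 2 ∣ u * w - (a * b : ℕ) := by
    have : u * w - (a * b : ℕ) = u * (w - b) + b * (u - a) := by push_cast; ring
    rw [this]
    exact dvd_add (dvd_mul_of_dvd_right hwb _) (dvd_mul_of_dvd_right hua _)
  rw [delta_eq_of_two_pow_dvd_sub hab, delta_eq_of_two_pow_dvd_sub hua,
    delta_eq_of_two_pow_dvd_sub hwb, ← Nat.cast_add, ZMod.natCast_eq_natCast_iff']
  obtain ⟨s, rfl⟩ : ∃ s, a = 2 * s + 1 := ⟨a / 2, by omega⟩
  obtain ⟨t, rfl⟩ : ∃ t, b = 2 * t + 1 := ⟨b / 2, by omega⟩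
  rw [show (2 * s + 1) * (2 * t + 1) = 2 * (2 * (s * t) + s + t) + 1 by ring]
  omega

lemma delta_one_eq_of_add_eq_two_mul {u v w : ℤ_[2]} (hu : ¬ 2 ∣ u) (hv : ¬ 2 ∣ v) (hw : ¬ 2 ∣ w)
    (h : u + v = 2 * w) : delta 1 u = delta 1 v := by
  have hcarry := delta_succ_add_two_pow_mul (m := 0) u hv
  have h2w : delta 1 (2 * w) = 1 := by
    rw [← delta_zero_of_not_two_dvd hw, ← delta_two_pow_mul 1 0 w, pow_one]
  simp only [zero_add, pow_zero, one_mul] at hcarry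
  rw [h, h2w, delta_zero_of_not_two_dvd hu] at hcarry
  grind

lemma congMod_iff_two_pow_dvd_sub {s : ℕ} {a b : ℤ_[2]} : CongMod s a b ↔ (2 : ℤ_[2]) ^ s ∣ a - b :=
  two_pow_dvd_iff_norm_le.symm

lemma TransitiveT.transMod {f : ℤ_[2] → ℤ_[2]} (hft : TransitiveT f) (s : ℕ) : TransMod f s := by
  rcases Nat.eq_zero_or_pos s with rfl | hs
  · exact fun x y => ⟨0, one_pos, by simpa [CongMod] using PadicInt.norm_le_one (x - y)⟩
  · exact hft s hs

lemma OneLip.two_pow_dvd_sub {f : ℤ_[2] → ℤ_[2]} (hf : OneLip f) {s : ℕ} {a b : ℤ_[2]}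
    (h : (2 : ℤ_[2]) ^ s ∣ a - b) : (2 : ℤ_[2]) ^ s ∣ f a - f b :=
  two_pow_dvd_iff_norm_le.2 ((hf a b).trans (two_pow_dvd_iff_norm_le.1 h))

noncomputable def reduceModTwoPow (f : ℤ_[2] → ℤ_[2]) (s : ℕ) : ZMod (2 ^ s) → ZMod (2 ^ s) :=
  fun b => PadicInt.toZModPow s (f b.val)

lemma OneLip.semiconj_reduceModTwoPow {f : ℤ_[2] → ℤ_[2]} (hf : OneLip f) (s : ℕ) :
    Semiconj (PadicInt.toZModPow s) f (reduceModTwoPow f s) := by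
  intro x
  refine toZModPow_eq_iff_two_pow_dvd_sub.2 (hf.two_pow_dvd_sub ?_)
  rw [← toZModPow_eq_iff_two_pow_dvd_sub, map_natCast, ZMod.natCast_zmod_val]

lemma minimalPeriod_eq_card_of_forall_exists_iterate_eq {α : Type*} [Fintype α] {F : α → α}
    (h : ∀ a b, ∃ i, F^[i] a = b) (a : α) : minimalPeriod F a = Fintype.card α := by
  have hper : a ∈ periodicPts F := by
    obtain ⟨i, hi⟩ := h (F a) a
    exact ⟨i + 1, i.succ_pos, by rw [IsPeriodicPt, IsFixedPt, iterate_succ_apply, hi]⟩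
  refine le_antisymm minimalPeriod_le_card ?_
  have hsurj : Surjective fun j : Fin (minimalPeriod F a) => F^[j] a := by
    intro b
    obtain ⟨i, rfl⟩ := h a b
    exact ⟨⟨i % _, Nat.mod_lt _ (minimalPeriod_pos_of_mem_periodicPts hper)⟩,
      iterate_mod_minimalPeriod_eq⟩
  simpa using Fintype.card_le_of_surjective _ hsurj

lemma OneLip.minimalPeriod_reduceModTwoPow {f : ℤ_[2] → ℤ_[2]} (hf : OneLip f) {s : ℕ}
    (hs : TransMod f s) (x : ℤ_[2]) :
    minimalPeriod (reduceModTwoPow f s) (PadicInt.toZModPow s x) = 2 ^ s := by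
  rw [minimalPeriod_eq_card_of_forall_exists_iterate_eq, ZMod.card]
  intro a b
  obtain ⟨i, -, hi⟩ := hs (a.val : ℤ_[2]) (b.val : ℤ_[2])
  refine ⟨i, ?_⟩
  rw [congMod_iff_two_pow_dvd_sub, ← toZModPow_eq_iff_two_pow_dvd_sub,
    ((hf.semiconj_reduceModTwoPow s).iterate_right i).eq] at hi
  simpa only [map_natCast, ZMod.natCast_zmod_val] using hi

lemma OneLip.two_pow_dvd_iterate_sub_iff {f : ℤ_[2] → ℤ_[2]} (hf : OneLip f) {s : ℕ}
    (hs : TransMod f s) (x : ℤ_[2]) (j : ℕ) :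
    (2 : ℤ_[2]) ^ s ∣ f^[j] x - x ↔ 2 ^ s ∣ j := by
  have h := isPeriodicPt_iff_minimalPeriod_dvd (f := reduceModTwoPow f s)
    (x := PadicInt.toZModPow s x) (n := j)
  rw [hf.minimalPeriod_reduceModTwoPow hs x] at h
  rw [← toZModPow_eq_iff_two_pow_dvd_sub, ((hf.semiconj_reduceModTwoPow s).iterate_right j).eq]
  exact h

lemma OneLip.exists_iterate_add_two_pow_eq {f : ℤ_[2] → ℤ_[2]} (hf : OneLip f)
    (hft : TransitiveT f) (m i : ℕ) (x : ℤ_[2]) :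
    ∃ u : ℤ_[2], ¬ 2 ∣ u ∧ f^[i + 2 ^ m] x = f^[i] x + 2 ^ m * u := by
  rw [add_comm i, iterate_add_apply]
  obtain ⟨u, hu⟩ := (hf.two_pow_dvd_iterate_sub_iff (hft.transMod m) (f^[i] x) (2 ^ m)).2 dvd_rfl
  refine ⟨u, fun h2 => ?_, by rw [← hu, add_sub_cancel]⟩
  have h := (hf.two_pow_dvd_iterate_sub_iff (hft.transMod (m + 1)) (f^[i] x) (2 ^ m)).1
    (by rw [hu, pow_succ]; exact mul_dvd_mul_left _ h2)
  rw [Nat.pow_dvd_pow_iff_le_right one_lt_two] at h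
  omega

lemma IsDerivMod.delta_one_eq_of_sub_eq {f g : ℤ_[2] → ℤ_[2]} {N m : ℕ} (hg : IsDerivMod f g 2 N)
    (hm : N ≤ m) {x u v : ℤ_[2]} (hv : ¬ 2 ∣ v) (h : f (x + 2 ^ m * u) - f x = 2 ^ m * v) :
    delta 1 v = delta 1 u + delta 1 (g x) := by
  have hd : ‖(2 : ℤ_[2]) ^ m * u‖ ≤ ((2 : ℝ) ^ m)⁻¹ := two_pow_dvd_iff_norm_le.1 (dvd_mul_right _ _)
  have hdN : ‖(2 : ℤ_[2]) ^ m * u‖ ≤ ((2 : ℝ) ^ N)⁻¹ :=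
    hd.trans (inv_anti₀ (by positivity) (pow_le_pow_right₀ one_le_two hm))
  have hlin : (2 : ℤ_[2]) ^ m * 2 ^ 2 ∣ 2 ^ m * (v - g x * u) := by
    rw [← pow_add, two_pow_dvd_iff_norm_le]
    calc ‖(2 : ℤ_[2]) ^ m * (v - g x * u)‖ = ‖f (x + 2 ^ m * u) - f x - g x * (2 ^ m * u)‖ := by
          rw [h]; ring_nf
      _ ≤ ((2 : ℝ) ^ 2)⁻¹ * ‖(2 : ℤ_[2]) ^ m * u‖ := hg _ _ hdN
      _ ≤ ((2 : ℝ) ^ 2)⁻¹ * ((2 : ℝ) ^ m)⁻¹ := by gcongr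
      _ = ((2 : ℝ) ^ (m + 2))⁻¹ := by rw [pow_add, _root_.mul_inv, mul_comm]
  have h4 : (2 : ℤ_[2]) ^ 2 ∣ v - g x * u :=
    (mul_dvd_mul_iff_left (pow_ne_zero m two_ne_zero)).1 hlin
  have hu : ¬ 2 ∣ u := fun h2 => hv (by
    simpa using dvd_add ((dvd_pow_self 2 two_ne_zero).trans h4) (dvd_mul_of_dvd_right h2 (g x)))
  have hgx : ¬ 2 ∣ g x := fun h2 => hv (by
    simpa using dvd_add ((dvd_pow_self 2 two_ne_zero).trans h4) (dvd_mul_of_dvd_left h2 u))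
  rw [delta_congr h4, delta_one_mul hgx hu, add_comm]

lemma OneLip.delta_succ_iterate_add_two_pow {f : ℤ_[2] → ℤ_[2]} (hf : OneLip f)
    (hft : TransitiveT f) (x₀ : ℤ_[2]) (m i : ℕ) :
    delta (m + 1) (f^[i + 2 ^ m] x₀) = delta (m + 1) (f^[i] x₀) + delta m (f^[i] x₀) +
      delta (m + 1) (f^[i + 2 ^ m] x₀ - f^[i] x₀) := by
  obtain ⟨u, hu, hi⟩ := hf.exists_iterate_add_two_pow_eq hft m i x₀
  rw [hi, add_sub_cancel_left, delta_succ_add_two_pow_mul _ hu, delta_two_pow_mul m 1]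

lemma OneLip.delta_succ_iterate_sub_succ {f g : ℤ_[2] → ℤ_[2]} {N m : ℕ} (hf : OneLip f)
    (hft : TransitiveT f) (hg : IsDerivMod f g 2 N) (hm : N ≤ m) (x₀ : ℤ_[2]) (i : ℕ) :
    delta (m + 1) (f^[i + 1 + 2 ^ m] x₀ - f^[i + 1] x₀) =
      delta (m + 1) (f^[i + 2 ^ m] x₀ - f^[i] x₀) + delta 1 (g (f^[i] x₀)) := by
  obtain ⟨u, -, hi⟩ := hf.exists_iterate_add_two_pow_eq hft m i x₀
  obtain ⟨v, hv, hi'⟩ := hf.exists_iterate_add_two_pow_eq hft m (i + 1) x₀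
  have hstep : f (f^[i] x₀ + 2 ^ m * u) - f (f^[i] x₀) = 2 ^ m * v := by
    rw [← hi, ← iterate_succ_apply' f, ← iterate_succ_apply' f, Nat.succ_eq_add_one,
      add_right_comm, hi', add_sub_cancel_left]
  rw [hi, hi', add_sub_cancel_left, add_sub_cancel_left, delta_two_pow_mul m 1,
    delta_two_pow_mul m 1, hg.delta_one_eq_of_sub_eq hm hv hstep]

lemma OneLip.delta_succ_iterate_sub_eq_add_sum {f g : ℤ_[2] → ℤ_[2]} {N m : ℕ} (hf : OneLip f)
    (hft : TransitiveT f) (hg : IsDerivMod f g 2 N) (hm : N ≤ m) (x₀ : ℤ_[2]) (i : ℕ) :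
    delta (m + 1) (f^[i + 2 ^ m] x₀ - f^[i] x₀) =
      delta (m + 1) (f^[2 ^ m] x₀ - x₀) + ∑ j ∈ range i, delta 1 (g (f^[j] x₀)) := by
  induction i with
  | zero => simp
  | succ i ih => rw [hf.delta_succ_iterate_sub_succ hft hg hm, ih, sum_range_succ, add_assoc]

lemma OneLip.delta_succ_iterate_sub_add_two_pow {f : ℤ_[2] → ℤ_[2]} (hf : OneLip f)
    (hft : TransitiveT f) (x₀ : ℤ_[2]) (m i : ℕ) :
    delta (m + 1) (f^[i + 2 ^ m + 2 ^ m] x₀ - f^[i + 2 ^ m] x₀) =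
      delta (m + 1) (f^[i + 2 ^ m] x₀ - f^[i] x₀) := by
  obtain ⟨u, hu, hi⟩ := hf.exists_iterate_add_two_pow_eq hft m i x₀
  obtain ⟨v, hv, hi'⟩ := hf.exists_iterate_add_two_pow_eq hft m (i + 2 ^ m) x₀
  obtain ⟨w, hw, hi''⟩ := hf.exists_iterate_add_two_pow_eq hft (m + 1) i x₀
  have huvw : u + v = 2 * w := by
    rw [show i + 2 ^ (m + 1) = i + 2 ^ m + 2 ^ m by rw [pow_succ]; ring] at hi''
    refine mul_left_cancel₀ (pow_ne_zero m (two_ne_zero' ℤ_[2])) ?_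
    linear_combination hi'' - hi - hi'
  rw [hi', hi, add_sub_cancel_left, add_sub_cancel_left, delta_two_pow_mul m 1,
    delta_two_pow_mul m 1, delta_one_eq_of_add_eq_two_mul hu hv hw huvw]

/-- Linear relation between adjacent coordinate sequences of a transitive T-function
uniformly differentiable modulo 4. -/
theorem linear_relation (f g : ℤ_[2] → ℤ_[2]) (N : ℕ)
    (hf : OneLip f) (hft : TransitiveT f) (hg : IsDerivMod f g 2 N) (x₀ : ℤ_[2]) :
    ∃ y : ℕ → ZMod 2, (∀ i : ℕ, y (i + 2 ^ N) = y i) ∧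
      ∀ n : ℕ, N + 1 ≤ n → ∀ i : ℕ,
        delta n (f^[i + 2 ^ (n - 1)] x₀) =
          delta (n - 1) (f^[i] x₀) + delta n (f^[i] x₀) +
            delta (n - 1) x₀ + delta n x₀ + delta n (f^[2 ^ (n - 1)] x₀) + y i := by
  refine ⟨fun i => ∑ j ∈ range i, delta 1 (g (f^[j] x₀)), fun i => ?_, fun n hn i => ?_⟩
  · have hshift := hf.delta_succ_iterate_sub_eq_add_sum hft hg le_rfl x₀ (i + 2 ^ N)
    rw [hf.delta_succ_iterate_sub_add_two_pow hft x₀ N i,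
      hf.delta_succ_iterate_sub_eq_add_sum hft hg le_rfl x₀ i] at hshift
    exact (add_left_cancel hshift).symm
  · obtain ⟨m, rfl⟩ : ∃ m, n = m + 1 := ⟨n - 1, by omega⟩
    have h₀ := hf.delta_succ_iterate_add_two_pow hft x₀ m 0
    rw [Nat.add_sub_cancel, hf.delta_succ_iterate_add_two_pow hft x₀ m i,
      hf.delta_succ_iterate_sub_eq_add_sum hft hg (by omega) x₀ i]
    simp only [zero_add, iterate_zero_apply] at h₀
    rw [h₀]
    grind
end

section
/- Let f : ℤ₂ → ℤ₂ be a 1-Lipschitz map and let g : ℤ₂ → ℤ₂ be a derivative of f modulo 2^M with parameter K. Then g is periodic modulo 2^K with values determined modulo 2^M: for all x, y ∈ ℤ₂, if x ≡ y (mod 2^K) then g(x) ≡ g(y) (mod 2^M), i.e. ‖g(x) − g(y)‖ ≤ 2^(−M). -/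
open Function Finset

/-! Comparing the first-order expansions of `f` at `y` with increments `x - y`, `x - y + 2^K`
and at `x` with increment `2^K`, the values of `f` cancel and leave `(g x - g y) * 2^K`
as a combination of three errors of norm at most `2^(-M-K)`; the ultrametric inequality
then bounds `‖g x - g y‖ * 2^(-K)` by `2^(-M-K)`. -/

theorem IsUltrametricDist.norm_sub_le_max {S : Type*} [SeminormedAddGroup S]
    [IsUltrametricDist S] (a b : S) : ‖a - b‖ ≤ max ‖a‖ ‖b‖ := by
  simpa only [sub_eq_add_neg, norm_neg] using IsUltrametricDist.norm_add_le_max a (-b)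

namespace IsDerivMod

variable {f g : ℤ_[2] → ℤ_[2]} {M K : ℕ}

theorem norm_error_le (hg : IsDerivMod f g M K) {x h : ℤ_[2]} (hh : ‖h‖ ≤ ((2 : ℝ) ^ K)⁻¹) :
    ‖f (x + h) - f x - g x * h‖ ≤ ((2 : ℝ) ^ M)⁻¹ * ((2 : ℝ) ^ K)⁻¹ :=
  (hg x h hh).trans (mul_le_mul_of_nonneg_left hh (by positivity))

theorem norm_sub_mul_le (hg : IsDerivMod f g M K) {x y h : ℤ_[2]}
    (hxy : ‖x - y‖ ≤ ((2 : ℝ) ^ K)⁻¹) (hh : ‖h‖ ≤ ((2 : ℝ) ^ K)⁻¹) :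
    ‖(g x - g y) * h‖ ≤ ((2 : ℝ) ^ M)⁻¹ * ((2 : ℝ) ^ K)⁻¹ := by
  have hxyh : ‖x - y + h‖ ≤ ((2 : ℝ) ^ K)⁻¹ :=
    (IsUltrametricDist.norm_add_le_max _ _).trans (max_le hxy hh)
  have e₁ := hg.norm_error_le (x := y) hxyh
  have e₂ := hg.norm_error_le (x := y) hxy
  have e₃ := hg.norm_error_le (x := x) hh
  rw [← add_assoc, add_sub_cancel] at e₁
  rw [add_sub_cancel] at e₂
  have hcomb : (g x - g y) * h =
      (f (x + h) - f y - g y * (x - y + h)) - (f x - f y - g y * (x - y))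
        - (f (x + h) - f x - g x * h) := by
    ring
  rw [hcomb]
  exact (IsUltrametricDist.norm_sub_le_max _ _).trans
    (max_le ((IsUltrametricDist.norm_sub_le_max _ _).trans (max_le e₁ e₂)) e₃)

end IsDerivMod

theorem deriv_mod_periodic_general (f g : ℤ_[2] → ℤ_[2]) (M K : ℕ)
    (hg : IsDerivMod f g M K) :
    ∀ x y : ℤ_[2], CongMod K x y → ‖g x - g y‖ ≤ ((2 : ℝ) ^ M)⁻¹ := by
  intro x y hxy
  have hnorm : ‖(2 : ℤ_[2]) ^ K‖ = ((2 : ℝ) ^ K)⁻¹ := by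
    simpa using PadicInt.norm_p_pow (p := 2) K
  have hbound := hg.norm_sub_mul_le hxy hnorm.le
  rw [norm_mul, hnorm] at hbound
  exact le_of_mul_le_mul_right hbound (by positivity)

/-- A derivative modulo `2^M` with parameter `K` is periodic modulo `2^K`
with values determined modulo `2^M`. -/
theorem deriv_mod_periodic (f g : ℤ_[2] → ℤ_[2]) (M K : ℕ)
    (hf : OneLip f) (hg : IsDerivMod f g M K) :
    ∀ x y : ℤ_[2], CongMod K x y → ‖g x - g y‖ ≤ ((2 : ℝ) ^ M)⁻¹ :=
  deriv_mod_periodic_general f g M K hg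
end

section
/- Let f : ℤ₂ → ℤ₂ be a 1-Lipschitz bijective map. Then f is uniformly differentiable modulo 2 with derivative identically 1: there exists K ∈ ℕ such that for all x, h ∈ ℤ₂ with ‖h‖ ≤ 2^(−K) one has ‖f(x+h) − f(x) − h‖ ≤ 2^(−1)·‖h‖. -/
open Function Finset

/-!
A bijective T-function is an isometry of `ℤ₂`: it is 1-Lipschitz, and if it shrank a distance
`2^(-k)` it would identify two residues modulo `2^(k+1)`. Hence `f (x + h) - f x` and `h` have the
same norm `2^(-k)`, i.e. both are `2^k` times a unit. Every unit of `ℤ₂` is `≡ 1 mod 2`, so the two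
agree modulo `2^(k+1)`, which is the claim, with `K = 0`.
-/

namespace PadicInt

section

variable {p : ℕ} [Fact p.Prime]

theorem norm_le_inv_mul_of_norm_lt {x y : ℤ_[p]} (h : ‖x‖ < ‖y‖) : ‖x‖ ≤ (p : ℝ)⁻¹ * ‖y‖ := by
  have hy : y ≠ 0 := norm_pos_iff.mp ((norm_nonneg x).trans_lt h)
  have hp : (p : ℝ) ≠ 0 := by exact_mod_cast (Fact.out : p.Prime).ne_zero
  rw [norm_eq_zpow_neg_valuation hy, norm_lt_pow_iff_norm_le_pow_sub_one] at h
  rwa [norm_eq_zpow_neg_valuation hy, ← zpow_neg_one, ← zpow_add₀ hp, neg_add_eq_sub]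

theorem valuation_eq_of_norm_eq {x y : ℤ_[p]} (hx : x ≠ 0) (hy : y ≠ 0) (h : ‖x‖ = ‖y‖) :
    x.valuation = y.valuation := by
  have hp : (1 : ℝ) < p := by exact_mod_cast (Fact.out : p.Prime).one_lt
  rw [norm_eq_zpow_neg_valuation hx, norm_eq_zpow_neg_valuation hy,
    zpow_right_inj₀ (by linarith) hp.ne', neg_inj] at h
  exact_mod_cast h

end

theorem toZMod_eq_one_of_norm_eq_one {a : ℤ_[2]} (ha : ‖a‖ = 1) : toZMod a = 1 := by
  have hunit : IsUnit (toZMod a) := (isUnit_iff.mpr ha).map toZMod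
  generalize toZMod a = z at hunit
  revert z
  decide

theorem norm_sub_lt_one_of_norm_eq_one {a b : ℤ_[2]} (ha : ‖a‖ = 1) (hb : ‖b‖ = 1) :
    ‖a - b‖ < 1 := by
  rw [← mem_nonunits, ← IsLocalRing.mem_maximalIdeal, ← ker_toZMod, RingHom.mem_ker, map_sub,
    toZMod_eq_one_of_norm_eq_one ha, toZMod_eq_one_of_norm_eq_one hb, sub_self]

theorem norm_sub_le_inv_two_mul_of_norm_eq {u v : ℤ_[2]} (h : ‖u‖ = ‖v‖) :
    ‖u - v‖ ≤ 2⁻¹ * ‖u‖ := by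
  rcases eq_or_ne u 0 with rfl | hu
  · simp [norm_eq_zero.mp (h.symm.trans norm_zero)]
  have hv : v ≠ 0 := norm_ne_zero_iff.mp (h ▸ norm_ne_zero_iff.mpr hu)
  have hdiff : u - v = ((unitCoeff hu : ℤ_[2]) - unitCoeff hv) * 2 ^ u.valuation := by
    conv_lhs => rw [unitCoeff_spec hu, unitCoeff_spec hv, ← valuation_eq_of_norm_eq hu hv h]
    push_cast
    ring
  have hnorm : ‖u‖ = ‖(2 : ℤ_[2]) ^ u.valuation‖ := by
    conv_lhs => rw [unitCoeff_spec hu]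
    rw [norm_mul, norm_units, one_mul, Nat.cast_ofNat]
  have hlt : ‖u - v‖ < ‖u‖ := by
    rw [hdiff, norm_mul, hnorm]
    exact mul_lt_of_lt_one_left (hnorm ▸ norm_pos_iff.mpr hu)
      (norm_sub_lt_one_of_norm_eq_one (norm_units _) (norm_units _))
  exact_mod_cast norm_le_inv_mul_of_norm_lt hlt

end PadicInt

theorem BijectiveT.norm_sub_le_norm_map_sub {f : ℤ_[2] → ℤ_[2]} (hbij : BijectiveT f)
    (a b : ℤ_[2]) : ‖a - b‖ ≤ ‖f a - f b‖ := by
  by_contra! hlt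
  have hab : a - b ≠ 0 := norm_pos_iff.mp ((norm_nonneg _).trans_lt hlt)
  set k := (a - b).valuation
  have hk : ‖a - b‖ = ((2 : ℝ) ^ k)⁻¹ := by
    rw [PadicInt.norm_eq_zpow_neg_valuation hab, zpow_neg, zpow_natCast, Nat.cast_ofNat]
  have hcong : CongMod (k + 1) (f a) (f b) :=
    calc ‖f a - f b‖ ≤ 2⁻¹ * ‖a - b‖ := by exact_mod_cast PadicInt.norm_le_inv_mul_of_norm_lt hlt
      _ = ((2 : ℝ) ^ (k + 1))⁻¹ := by rw [hk, pow_succ, mul_inv, mul_comm]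
  have hcong' : ‖a - b‖ ≤ ((2 : ℝ) ^ (k + 1))⁻¹ := (hbij (k + 1) k.succ_pos).1 a b hcong
  rw [hk, inv_le_inv₀ (by positivity) (by positivity)] at hcong'
  exact (pow_lt_pow_right₀ one_lt_two k.lt_succ_self).not_ge hcong'

theorem OneLip.norm_map_sub_eq {f : ℤ_[2] → ℤ_[2]} (hf : OneLip f) (hbij : BijectiveT f)
    (a b : ℤ_[2]) : ‖f a - f b‖ = ‖a - b‖ :=
  le_antisymm (hf a b) (hbij.norm_sub_le_norm_map_sub a b)

/-- A bijective T-function is uniformly differentiable modulo 2 with derivative 1. -/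
theorem bijective_unif_diff_mod_two (f : ℤ_[2] → ℤ_[2])
    (hf : OneLip f) (hbij : BijectiveT f) :
    ∃ K : ℕ, ∀ x h : ℤ_[2], ‖h‖ ≤ ((2 : ℝ) ^ K)⁻¹ →
      ‖f (x + h) - f x - h‖ ≤ ((2 : ℝ) ^ (1 : ℕ))⁻¹ * ‖h‖ := by
  refine ⟨0, fun x h _ => ?_⟩
  have hiso : ‖f (x + h) - f x‖ = ‖h‖ := by
    rw [hf.norm_map_sub_eq hbij, add_sub_cancel_left]
  rw [pow_one, ← hiso]
  exact PadicInt.norm_sub_le_inv_two_mul_of_norm_eq hiso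
end

section
/- Let f : ℤ₂ → ℤ₂ be a 1-Lipschitz map and let g : ℤ₂ → ℤ₂ be a derivative of f modulo 2 with parameter K. Then the following are equivalent: (i) f is bijective; (ii) f is bijective modulo 2^K and g(x) ≡ 1 (mod 2) for all x ∈ ℤ₂ (i.e. ‖g(x) − 1‖ ≤ 2^(−1)); (iii) f is bijective modulo 2^(K+1). -/
open Function Finset

/-!
Modulo `2^n` a 1-Lipschitz map induces a self-map of the finite ring `ZMod (2^n)`, so
bijectivity modulo `2^n` is the same as surjectivity modulo `2^n`, and it descends to smaller `n`.
Past `2^K` the derivative controls `f` up to an error of relative size `1/2`: if `g` is odd, a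
Hensel step `x ↦ x + (y - f x) / g x` lifts surjectivity from `2^n` to `2^(n+1)`; if some `g x`
is even, then `f (x + 2^K) ≡ f x` modulo `2^(K+1)`, contradicting injectivity modulo `2^(K+1)`.
-/

open PadicInt

theorem congMod_iff_toZModPow {n : ℕ} {a b : ℤ_[2]} :
    CongMod n a b ↔ toZModPow n a = toZModPow n b := by
  rw [CongMod, ← sub_eq_zero, ← map_sub, ← RingHom.mem_ker, ker_toZModPow,
    ← norm_le_pow_iff_mem_span_pow]
  norm_num

theorem inv_two_pow_anti {m n : ℕ} (hmn : m ≤ n) : ((2 : ℝ) ^ n)⁻¹ ≤ ((2 : ℝ) ^ m)⁻¹ :=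
  inv_anti₀ (by positivity) (pow_le_pow_right₀ one_le_two hmn)

theorem CongMod.mono {m n : ℕ} {a b : ℤ_[2]} (hmn : m ≤ n) (h : CongMod n a b) :
    CongMod m a b :=
  h.trans (inv_two_pow_anti hmn)

theorem congMod_one_zero_or_one (z : ℤ_[2]) : CongMod 1 z 0 ∨ CongMod 1 z 1 := by
  simp only [congMod_iff_toZModPow, map_zero, map_one]
  generalize toZModPow 1 z = w
  revert w
  decide

theorem isUnit_of_congMod_one {z : ℤ_[2]} (h : CongMod 1 z 1) : IsUnit z := by
  have hlt : 1 - z ∈ nonunits ℤ_[2] := by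
    rw [mem_nonunits, norm_sub_rev]
    exact h.trans_lt (by norm_num)
  simpa using IsLocalRing.isUnit_one_sub_self_of_mem_nonunits _ hlt

theorem norm_two_pow (n : ℕ) : ‖(2 : ℤ_[2]) ^ n‖ = ((2 : ℝ) ^ n)⁻¹ := by
  simpa using norm_p_pow (p := 2) n

theorem inv_two_pow_succ (n : ℕ) :
    ((2 : ℝ) ^ (n + 1))⁻¹ = ((2 : ℝ) ^ (1 : ℕ))⁻¹ * ((2 : ℝ) ^ n)⁻¹ := by
  rw [← _root_.mul_inv, ← pow_add, add_comm]

theorem toZModPow_surjective {p : ℕ} [Fact p.Prime] (n : ℕ) :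
    Surjective (toZModPow n : ℤ_[p] →+* ZMod (p ^ n)) :=
  fun z => ⟨z.val, by rw [map_natCast, ZMod.natCast_zmod_val]⟩

theorem OneLip.congMod {f : ℤ_[2] → ℤ_[2]} (hf : OneLip f) {n : ℕ} {a b : ℤ_[2]}
    (h : CongMod n a b) : CongMod n (f a) (f b) :=
  (hf a b).trans h

/-- The residue map of `f` modulo `2^n`, evaluated at the representative `z.val`; for 1-Lipschitz
`f` every representative gives the same value (`OneLip.modMap_toZModPow`). -/
noncomputable def modMap (f : ℤ_[2] → ℤ_[2]) (n : ℕ) (z : ZMod (2 ^ n)) : ZMod (2 ^ n) :=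
  toZModPow n (f z.val)

theorem OneLip.modMap_toZModPow {f : ℤ_[2] → ℤ_[2]} (hf : OneLip f) (n : ℕ) (x : ℤ_[2]) :
    modMap f n (toZModPow n x) = toZModPow n (f x) := by
  rw [modMap, ← congMod_iff_toZModPow]
  apply hf.congMod
  rw [congMod_iff_toZModPow, map_natCast, ZMod.natCast_zmod_val]

theorem OneLip.surjective_modMap_iff {f : ℤ_[2] → ℤ_[2]} (hf : OneLip f) (n : ℕ) :
    Surjective (modMap f n) ↔ ∀ y, ∃ x, CongMod n (f x) y := by
  have hπ := toZModPow_surjective (p := 2) n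
  simp only [Surjective, hπ.forall, hπ.exists, hf.modMap_toZModPow, congMod_iff_toZModPow]

theorem OneLip.injective_modMap_iff {f : ℤ_[2] → ℤ_[2]} (hf : OneLip f) (n : ℕ) :
    Injective (modMap f n) ↔ ∀ a b, CongMod n (f a) (f b) → CongMod n a b := by
  have hπ := toZModPow_surjective (p := 2) n
  simp only [Injective, hπ.forall, hf.modMap_toZModPow, congMod_iff_toZModPow]

theorem OneLip.bijMod_iff {f : ℤ_[2] → ℤ_[2]} (hf : OneLip f) (n : ℕ) :
    BijMod f n ↔ ∀ y, ∃ x, CongMod n (f x) y := by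
  rw [BijMod, ← hf.surjective_modMap_iff, ← hf.injective_modMap_iff,
    Finite.injective_iff_surjective, and_self]

theorem OneLip.bijMod_mono {f : ℤ_[2] → ℤ_[2]} (hf : OneLip f) {m n : ℕ} (hmn : m ≤ n)
    (h : BijMod f n) : BijMod f m := by
  rw [hf.bijMod_iff] at h ⊢
  intro y
  obtain ⟨x, hx⟩ := h y
  exact ⟨x, hx.mono hmn⟩

section Derivative

variable {f g : ℤ_[2] → ℤ_[2]} {K : ℕ}

theorem IsDerivMod.bijMod_succ (hf : OneLip f) (hg : IsDerivMod f g 1 K)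
    (hunit : ∀ x, CongMod 1 (g x) 1) {n : ℕ} (hKn : K ≤ n) (h : BijMod f n) :
    BijMod f (n + 1) := by
  rw [hf.bijMod_iff] at h ⊢
  intro y
  obtain ⟨x, hx⟩ := h y
  obtain ⟨u, hu⟩ := isUnit_of_congMod_one (hunit x)
  set t := (y - f x) * ↑u⁻¹
  have ht : ‖t‖ ≤ ((2 : ℝ) ^ n)⁻¹ :=
    calc ‖t‖ ≤ ‖y - f x‖ * ‖(↑u⁻¹ : ℤ_[2])‖ := norm_mul_le _ _
      _ ≤ ‖y - f x‖ := mul_le_of_le_one_right (norm_nonneg _) (norm_le_one _)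
      _ ≤ ((2 : ℝ) ^ n)⁻¹ := by rw [norm_sub_rev]; exact hx
  have hgt : g x * t = y - f x := by rw [← hu, mul_left_comm, Units.mul_inv, mul_one]
  refine ⟨x + t, ?_⟩
  calc ‖f (x + t) - y‖ = ‖f (x + t) - f x - g x * t‖ := by rw [hgt, sub_sub_sub_cancel_right]
    _ ≤ ((2 : ℝ) ^ (1 : ℕ))⁻¹ * ‖t‖ := hg x t (ht.trans (inv_two_pow_anti hKn))
    _ ≤ ((2 : ℝ) ^ (1 : ℕ))⁻¹ * ((2 : ℝ) ^ n)⁻¹ := by gcongr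
    _ = ((2 : ℝ) ^ (n + 1))⁻¹ := (inv_two_pow_succ n).symm

theorem IsDerivMod.bijMod_of_le (hf : OneLip f) (hg : IsDerivMod f g 1 K)
    (hunit : ∀ x, CongMod 1 (g x) 1) (h : BijMod f K) {n : ℕ} (hKn : K ≤ n) : BijMod f n := by
  induction n, hKn using Nat.le_induction with
  | base => exact h
  | succ n hKn ih => exact hg.bijMod_succ hf hunit hKn ih

theorem IsDerivMod.congMod_one (hg : IsDerivMod f g 1 K) (h : BijMod f (K + 1)) (x : ℤ_[2]) :
    CongMod 1 (g x) 1 := by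
  refine (congMod_one_zero_or_one (g x)).resolve_left fun hg0 => ?_
  have ht : ‖(2 : ℤ_[2]) ^ K‖ = ((2 : ℝ) ^ K)⁻¹ := norm_two_pow K
  have herr := hg x (2 ^ K) ht.le
  rw [ht] at herr
  have hlin : ‖g x * 2 ^ K‖ ≤ ((2 : ℝ) ^ (1 : ℕ))⁻¹ * ((2 : ℝ) ^ K)⁻¹ := by
    rw [norm_mul, ht]
    gcongr
    simpa [CongMod] using hg0
  have hfx : CongMod (K + 1) (f (x + 2 ^ K)) (f x) := by
    rw [CongMod, inv_two_pow_succ, ← sub_add_cancel (f (x + 2 ^ K) - f x) (g x * 2 ^ K)]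
    exact (IsUltrametricDist.norm_add_le_max _ _).trans (max_le herr hlin)
  have hx := h.1 _ _ hfx
  rw [CongMod, add_sub_cancel_left, ht, inv_two_pow_succ] at hx
  linarith [show (0 : ℝ) < ((2 : ℝ) ^ K)⁻¹ by positivity]

end Derivative

/-- Bijectivity criterion for a T-function uniformly differentiable modulo 2. -/
theorem bijectivity_criterion (f g : ℤ_[2] → ℤ_[2]) (K : ℕ)
    (hf : OneLip f) (hg : IsDerivMod f g 1 K) :
    (BijectiveT f ↔ (BijMod f K ∧ ∀ x : ℤ_[2], ‖g x - 1‖ ≤ ((2 : ℝ) ^ (1 : ℕ))⁻¹)) ∧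
    (BijectiveT f ↔ BijMod f (K + 1)) := by
  have h_i_iii : BijectiveT f → BijMod f (K + 1) := fun h => h (K + 1) (Nat.le_add_left 1 K)
  have h_iii_ii : BijMod f (K + 1) → BijMod f K ∧ ∀ x, CongMod 1 (g x) 1 :=
    fun h => ⟨hf.bijMod_mono K.le_succ h, hg.congMod_one h⟩
  have h_ii_i : BijMod f K ∧ (∀ x, CongMod 1 (g x) 1) → BijectiveT f := by
    rintro ⟨hK, hunit⟩ n -
    rcases le_total n K with hnK | hKn
    · exact hf.bijMod_mono hnK hK
    · exact hg.bijMod_of_le hf hunit hK hKn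
  exact ⟨⟨h_iii_ii ∘ h_i_iii, h_ii_i⟩, ⟨h_i_iii, h_ii_i ∘ h_iii_ii⟩⟩
end

section
/- A 1-Lipschitz map f : ℤ₂ → ℤ₂ is transitive if and only if there exists a 1-Lipschitz map g : ℤ₂ → ℤ₂ such that f(x) = 1 + x + 2·(g(x+1) − g(x)) for all x ∈ ℤ₂. -/
open Function Finset

/-! For a 1-Lipschitz `f` transitive modulo `2^n`, the orbit of every `x` modulo `2^n` is a single
cycle of length `2^n`; hence `f` is transitive modulo `2^(n+1)` exactly when
`f^[2^n] x ≡ x + 2^n (mod 2^(n+1))`, i.e. when the cycle modulo `2^n` lifts to one cycle of twice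
the length rather than two. Writing `f x = 1 + x + 2 h x` and telescoping,
`f^[2^n] x - x - 2^n = 2 ∑_{i<2^n} h (f^[i] x)`, and since the orbit runs once through all
residues modulo `2^n`, this sum is `∑_{r<2^n} h r` modulo `2^n`. So `f` is transitive iff `h` is
1-Lipschitz with `∑_{r<2^n} h r ≡ 0 (mod 2^n)` for every `n`. These are exactly the conditions
under which the partial sums `∑_{k<m} h k` are 1-Lipschitz in `m ∈ ℕ`, so that they extend to a
1-Lipschitz `g` on `ℤ₂` with `g (x + 1) - g x = h x`. -/

open Filter Topology fwdDiff

theorem congMod_iff_dvd {n : ℕ} {a b : ℤ_[2]} : CongMod n a b ↔ (2 : ℤ_[2]) ^ n ∣ a - b := by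
  have := PadicInt.norm_le_pow_iff_mem_span_pow (a - b) n (p := 2)
  rw [Ideal.mem_span_singleton] at this
  rw [CongMod, ← zpow_natCast, ← zpow_neg]
  exact_mod_cast this

theorem congMod_zero (a b : ℤ_[2]) : CongMod 0 a b := by
  simpa [CongMod] using PadicInt.norm_le_one (a - b)

theorem congMod_natCast_iff {n a b : ℕ} : CongMod n a b ↔ a ≡ b [MOD 2 ^ n] := by
  rw [CongMod, norm_sub_rev, Nat.modEq_iff_dvd, ← zpow_natCast, ← zpow_neg]
  exact_mod_cast PadicInt.norm_int_le_pow_iff_dvd (p := 2) (k := (b : ℤ) - a) (n := n)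

theorem congMod_appr (x : ℤ_[2]) (n : ℕ) : CongMod n x (x.appr n) := by
  rw [congMod_iff_dvd, ← Ideal.mem_span_singleton]
  exact_mod_cast PadicInt.appr_spec n x

namespace CongMod

variable {n m : ℕ} {a b c d : ℤ_[2]}

@[refl] theorem refl (n : ℕ) (a : ℤ_[2]) : CongMod n a a := by
  simp [CongMod]

theorem symm (h : CongMod n a b) : CongMod n b a := by
  rwa [CongMod, norm_sub_rev]

theorem trans (h₁ : CongMod n a b) (h₂ : CongMod n b c) : CongMod n a c := by
  rw [congMod_iff_dvd] at *
  simpa using dvd_add h₁ h₂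

theorem add (h₁ : CongMod n a b) (h₂ : CongMod n c d) : CongMod n (a + c) (b + d) := by
  rw [congMod_iff_dvd] at *
  convert dvd_add h₁ h₂ using 1
  ring

theorem sub (h₁ : CongMod n a b) (h₂ : CongMod n c d) : CongMod n (a - c) (b - d) := by
  rw [congMod_iff_dvd] at *
  convert dvd_sub h₁ h₂ using 1
  ring

theorem of_le (h : CongMod m a b) (hnm : n ≤ m) : CongMod n a b := by
  rw [congMod_iff_dvd] at *
  exact (pow_dvd_pow 2 hnm).trans h

theorem sum {ι : Type*} {s : Finset ι} {u v : ι → ℤ_[2]} (h : ∀ i ∈ s, CongMod n (u i) (v i)) :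
    CongMod n (∑ i ∈ s, u i) (∑ i ∈ s, v i) := by
  rw [congMod_iff_dvd, ← Finset.sum_sub_distrib]
  exact Finset.dvd_sum fun i hi => congMod_iff_dvd.mp (h i hi)

theorem two_mul_iff : CongMod (n + 1) (2 * a) (2 * b) ↔ CongMod n a b := by
  rw [congMod_iff_dvd, congMod_iff_dvd, ← mul_sub, pow_succ', mul_dvd_mul_iff_left two_ne_zero]

theorem add_two_pow_left (a : ℤ_[2]) : CongMod n (a + 2 ^ n) a := by
  simp [congMod_iff_dvd]

theorem succ_or (h : CongMod n a b) : CongMod (n + 1) a b ∨ CongMod (n + 1) a (b + 2 ^ n) := by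
  obtain ⟨w, hw⟩ := congMod_iff_dvd.mp h
  obtain ⟨v, hv⟩ := congMod_iff_dvd.mp (congMod_appr w 1)
  have hlt : w.appr 1 < 2 := by simpa using PadicInt.appr_lt w 1
  interval_cases w.appr 1 <;> [left; right] <;>
    exact congMod_iff_dvd.mpr ⟨v, by push_cast at hv; linear_combination hw + 2 ^ n * hv⟩

theorem eq_of_forall (h : ∀ n, CongMod n a b) : a = b := by
  have hlim : Tendsto (fun n : ℕ => ((2 : ℝ) ^ n)⁻¹) atTop (𝓝 0) :=
    tendsto_inv_atTop_zero.comp (tendsto_pow_atTop_atTop_of_one_lt one_lt_two)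
  have : ‖a - b‖ ≤ 0 := ge_of_tendsto' hlim h
  rwa [norm_le_zero_iff, sub_eq_zero] at this

end CongMod

instance (n : ℕ) : Trans (CongMod n) (CongMod n) (CongMod n) := ⟨CongMod.trans⟩

theorem appr_eq_of_congMod_natCast {n r : ℕ} {x : ℤ_[2]} (h : CongMod n x r) (hr : r < 2 ^ n) :
    x.appr n = r :=
  (congMod_natCast_iff.mp ((congMod_appr x n).symm.trans h)).eq_of_lt_of_lt
    (PadicInt.appr_lt x n) hr

namespace OneLip

variable {f g u v : ℤ_[2] → ℤ_[2]}

theorem congMod_s8 (hf : OneLip f) {n : ℕ} {a b : ℤ_[2]} (h : CongMod n a b) :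
    CongMod n (f a) (f b) :=
  (hf a b).trans h

theorem of_congMod (h : ∀ n a b, CongMod n a b → CongMod n (f a) (f b)) : OneLip f := by
  intro a b
  rcases eq_or_ne a b with rfl | hne
  · simp
  have hnorm : ‖a - b‖ = ((2 : ℝ) ^ (a - b).valuation)⁻¹ := by
    rw [PadicInt.norm_eq_zpow_neg_valuation (sub_ne_zero.mpr hne), zpow_neg, zpow_natCast]
    norm_num
  rw [hnorm]
  exact h _ a b hnorm.le

theorem iterate (hf : OneLip f) (k : ℕ) : OneLip f^[k] := by
  induction k with
  | zero => exact fun a b => le_rfl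
  | succ k ih =>
    intro a b
    rw [iterate_succ_apply', iterate_succ_apply']
    exact (hf _ _).trans (ih a b)

theorem fwdDiff (hg : OneLip g) : OneLip (Δ_[1] g) :=
  of_congMod fun _ _ _ h => (hg.congMod_s8 (h.add (CongMod.refl _ 1))).sub (hg.congMod_s8 h)

theorem eq_of_natCast (hu : OneLip u) (hv : OneLip v) (h : ∀ m : ℕ, u m = v m) : u = v := by
  funext x
  refine CongMod.eq_of_forall fun n => ?_
  calc CongMod n (u x) (u (x.appr n)) := hu.congMod_s8 (congMod_appr x n)
    _ = v (x.appr n) := h _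
    CongMod n _ (v x) := hv.congMod_s8 (congMod_appr x n).symm

theorem sum_range_fwdDiff_congMod (hg : OneLip g) (n : ℕ) :
    CongMod n (∑ r ∈ range (2 ^ n), Δ_[1] g r) 0 := by
  have htel : ∑ r ∈ range (2 ^ n), Δ_[1] g r = g (2 ^ n) - g 0 := by
    show ∑ r ∈ range (2 ^ n), (g (r + 1) - g r) = _
    simpa using Finset.sum_range_sub (fun r : ℕ => g r) (2 ^ n)
  have h2n : CongMod n (2 ^ n) 0 := by simpa using CongMod.add_two_pow_left (n := n) 0
  simpa [htel] using (hg.congMod_s8 h2n).sub (CongMod.refl n (g 0))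

end OneLip

namespace TransMod

variable {f : ℤ_[2] → ℤ_[2]} {n : ℕ}

theorem zero (f : ℤ_[2] → ℤ_[2]) : TransMod f 0 :=
  fun _ _ => ⟨0, Nat.one_pos, congMod_zero _ _⟩

theorem sum_iterate_congMod (ht : TransMod f n) {u : ℤ_[2] → ℤ_[2]}
    (hu : ∀ a b, CongMod n a b → CongMod n (u a) (u b)) (x : ℤ_[2]) :
    CongMod n (∑ i ∈ range (2 ^ n), u (f^[i] x)) (∑ r ∈ range (2 ^ n), u r) := by
  set ψ : ℕ → ℕ := fun i => (f^[i] x).appr n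
  have hmaps : Set.MapsTo ψ (range (2 ^ n)) (range (2 ^ n)) :=
    fun i _ => mem_range.mpr (PadicInt.appr_lt _ n)
  have hsurj : Set.SurjOn ψ (range (2 ^ n)) (range (2 ^ n)) := by
    intro r hr
    obtain ⟨i, hi, hir⟩ := ht x r
    exact ⟨i, mem_range.mpr hi, appr_eq_of_congMod_natCast hir (mem_range.mp hr)⟩
  have hinj := Finset.injOn_of_surjOn_of_card_le ψ hmaps hsurj le_rfl
  calc CongMod n (∑ i ∈ range (2 ^ n), u (f^[i] x)) (∑ i ∈ range (2 ^ n), u (ψ i)) :=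
        CongMod.sum fun i _ => hu _ _ (congMod_appr _ n)
    _ = ∑ r ∈ range (2 ^ n), u r := Finset.sum_nbij ψ hmaps hinj hsurj fun _ _ => rfl

theorem two_pow_le_of_iterate_congMod (ht : TransMod f n) (hf : OneLip f) {x : ℤ_[2]} {t : ℕ}
    (htpos : 0 < t) (hper : CongMod n (f^[t] x) x) : 2 ^ n ≤ t := by
  have hmul : ∀ q, CongMod n (f^[t * q] x) x := by
    intro q
    induction q with
    | zero => rfl
    | succ q ih =>
      rw [Nat.mul_succ, iterate_add_apply]
      exact ((hf.iterate _).congMod_s8 hper).trans ih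
  have hmod : ∀ i, CongMod n (f^[i] x) (f^[i % t] x) := by
    intro i
    conv_lhs => rw [← Nat.mod_add_div i t, iterate_add_apply]
    exact (hf.iterate _).congMod_s8 (hmul _)
  have hsurj : Set.SurjOn (fun i => (f^[i] x).appr n) (range t) (range (2 ^ n)) := by
    intro r hr
    obtain ⟨i, -, hi⟩ := ht x r
    exact ⟨i % t, mem_range.mpr (Nat.mod_lt i htpos),
      appr_eq_of_congMod_natCast ((hmod i).symm.trans hi) (mem_range.mp hr)⟩
  simpa using Finset.card_le_card_of_surjOn _ hsurj

theorem iterate_two_pow_congMod (ht : TransMod f n) (hf : OneLip f) (ht' : TransMod f (n + 1))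
    (x : ℤ_[2]) : CongMod (n + 1) (f^[2 ^ n] x) (x + 2 ^ n) := by
  have hperiod : CongMod n (f^[2 ^ n] x) x := by
    obtain ⟨i, hi, hix⟩ := ht (f x) x
    rw [← iterate_succ_apply] at hix
    have := ht.two_pow_le_of_iterate_congMod hf i.succ_pos hix
    rwa [show i.succ = 2 ^ n by omega] at hix
  exact hperiod.succ_or.resolve_left fun h => (Nat.pow_lt_pow_succ one_lt_two).not_ge
    (ht'.two_pow_le_of_iterate_congMod hf (Nat.two_pow_pos n) h)

theorem succ (ht : TransMod f n) (hstep : ∀ x, CongMod (n + 1) (f^[2 ^ n] x) (x + 2 ^ n)) :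
    TransMod f (n + 1) := by
  intro x y
  obtain ⟨i, hi, hxy⟩ := ht x y
  rcases hxy.succ_or with h | h
  · exact ⟨i, hi.trans (Nat.pow_lt_pow_succ one_lt_two), h⟩
  · refine ⟨2 ^ n + i, by rw [pow_succ]; omega, ?_⟩
    rw [iterate_add_apply]
    calc CongMod (n + 1) (f^[2 ^ n] (f^[i] x)) (f^[i] x + 2 ^ n) := hstep _
      CongMod _ _ (y + 2 ^ n + 2 ^ n) := h.add (CongMod.refl _ _)
      _ = y + 2 ^ (n + 1) := by ring
      CongMod _ _ y := CongMod.add_two_pow_left y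

end TransMod

section ExplicitForm

variable {f h : ℤ_[2] → ℤ_[2]}

theorem iterate_eq_add_two_mul_sum (hfh : ∀ x, f x = 1 + x + 2 * h x) (N : ℕ) (x : ℤ_[2]) :
    f^[N] x = x + N + 2 * ∑ i ∈ range N, h (f^[i] x) := by
  induction N with
  | zero => simp
  | succ N ih =>
    rw [iterate_succ_apply', hfh, sum_range_succ]
    push_cast
    linear_combination ih

theorem TransMod.iterate_two_pow_congMod_iff {n : ℕ} (ht : TransMod f n)
    (hfh : ∀ x, f x = 1 + x + 2 * h x) (hh : OneLip h) (x : ℤ_[2]) :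
    CongMod (n + 1) (f^[2 ^ n] x) (x + 2 ^ n) ↔ CongMod n (∑ r ∈ range (2 ^ n), h r) 0 := by
  have horbit := ht.sum_iterate_congMod (fun _ _ => hh.congMod_s8) x
  rw [iterate_eq_add_two_mul_sum hfh, Nat.cast_pow, Nat.cast_ofNat]
  calc CongMod (n + 1) (x + 2 ^ n + 2 * ∑ i ∈ range (2 ^ n), h (f^[i] x)) (x + 2 ^ n)
      ↔ CongMod (n + 1) (2 * ∑ i ∈ range (2 ^ n), h (f^[i] x)) (2 * 0) := by
        simp only [congMod_iff_dvd, add_sub_cancel_left, mul_zero, sub_zero]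
    _ ↔ CongMod n (∑ i ∈ range (2 ^ n), h (f^[i] x)) 0 := CongMod.two_mul_iff
    _ ↔ CongMod n (∑ r ∈ range (2 ^ n), h r) 0 := ⟨horbit.symm.trans, horbit.trans⟩

theorem congMod_sub_self_of_iterate_two_pow (hf : OneLip f) {n : ℕ}
    (hstep : ∀ x, CongMod (n + 1) (f^[2 ^ n] x) (x + 2 ^ n)) {a b : ℤ_[2]} (hab : CongMod n a b) :
    CongMod (n + 1) (f a - a) (f b - b) := by
  rcases hab.succ_or with hsame | hshift
  · exact (hf.congMod_s8 hsame).sub hsame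
  · have hfa : CongMod (n + 1) (f a) (f b + 2 ^ n) :=
      calc CongMod (n + 1) (f a) (f (f^[2 ^ n] b)) := hf.congMod_s8 (hshift.trans (hstep b).symm)
        _ = f^[2 ^ n] (f b) := ((Commute.iterate_self f _) b).symm
        CongMod _ _ (f b + 2 ^ n) := hstep (f b)
    simpa using hfa.sub hshift

theorem exists_oneLip_eq_one_add_add_two_mul (hf : OneLip f)
    (hstep : ∀ n x, CongMod (n + 1) (f^[2 ^ n] x) (x + 2 ^ n)) :
    ∃ h : ℤ_[2] → ℤ_[2], OneLip h ∧ ∀ x, f x = 1 + x + 2 * h x := by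
  have hdvd : ∀ x, (2 : ℤ_[2]) ∣ f x - 1 - x := fun x => by
    simpa [congMod_iff_dvd, sub_sub, add_comm] using hstep 0 x
  choose h hh using hdvd
  refine ⟨h, OneLip.of_congMod fun n a b hab => ?_, fun x => by linear_combination hh x⟩
  rw [← CongMod.two_mul_iff, ← hh, ← hh]
  simpa [sub_sub, add_comm] using
    (congMod_sub_self_of_iterate_two_pow hf (hstep n) hab).sub (CongMod.refl _ 1)

end ExplicitForm

theorem exists_oneLip_extend_natCast {G : ℕ → ℤ_[2]}
    (hG : ∀ n a b, a ≡ b [MOD 2 ^ n] → CongMod n (G a) (G b)) :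
    ∃ g : ℤ_[2] → ℤ_[2], OneLip g ∧ ∀ m : ℕ, g m = G m := by
  have happr : ∀ (x : ℤ_[2]) {n m : ℕ}, n ≤ m → x.appr m ≡ x.appr n [MOD 2 ^ n] := fun x n m hnm =>
    congMod_natCast_iff.mp (((congMod_appr x m).symm.of_le hnm).trans (congMod_appr x n))
  have hcauchy : ∀ x : ℤ_[2], CauchySeq fun m => G (x.appr m) := fun x =>
    cauchySeq_of_le_geometric_two (C := 2) fun m => by
      rw [dist_eq_norm, div_self two_ne_zero, one_div]
      exact hG m _ _ (happr x m.le_succ).symm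
  set g : ℤ_[2] → ℤ_[2] := fun x => limUnder atTop fun m => G (x.appr m)
  have hg : ∀ x n, CongMod n (g x) (G (x.appr n)) := fun x n =>
    le_of_tendsto ((hcauchy x).tendsto_limUnder.sub_const _).norm
      (eventually_atTop.mpr ⟨n, fun m hm => hG n _ _ (happr x hm)⟩)
  refine ⟨g, OneLip.of_congMod fun n a b hab => ?_, fun m => CongMod.eq_of_forall fun n => ?_⟩
  · have hab' : a.appr n ≡ b.appr n [MOD 2 ^ n] := congMod_natCast_iff.mp
      ((congMod_appr a n).symm.trans (hab.trans (congMod_appr b n)))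
    exact (hg a n).trans ((hG n _ _ hab').trans (hg b n).symm)
  · exact (hg m n).trans (hG n _ _ (congMod_natCast_iff.mp (congMod_appr m n).symm))

theorem exists_oneLip_fwdDiff_eq {h : ℤ_[2] → ℤ_[2]} (hh : OneLip h)
    (hsum : ∀ n, CongMod n (∑ r ∈ range (2 ^ n), h r) 0) :
    ∃ g : ℤ_[2] → ℤ_[2], OneLip g ∧ Δ_[1] g = h := by
  set G : ℕ → ℤ_[2] := fun m => ∑ k ∈ range m, h k
  have hperiod : ∀ n a, CongMod n (G (a + 2 ^ n)) (G a) := by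
    intro n a
    induction a with
    | zero => simpa [G] using hsum n
    | succ a ih =>
      have hshift : CongMod n (h ↑(a + 2 ^ n)) (h a) :=
        hh.congMod_s8 (by push_cast; exact CongMod.add_two_pow_left _)
      simpa only [G, Nat.add_right_comm a 1, sum_range_succ] using ih.add hshift
  have hmul : ∀ n r q, CongMod n (G (r + 2 ^ n * q)) (G r) := by
    intro n r q
    induction q with
    | zero => rfl
    | succ q ih => rw [Nat.mul_succ, ← add_assoc]; exact (hperiod n _).trans ih
  have hG : ∀ n a b, a ≡ b [MOD 2 ^ n] → CongMod n (G a) (G b) := by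
    intro n a b hab
    rw [← Nat.mod_add_div a (2 ^ n), ← Nat.mod_add_div b (2 ^ n), hab]
    exact (hmul n _ _).trans (hmul n _ _).symm
  obtain ⟨g, hg, hgG⟩ := exists_oneLip_extend_natCast hG
  refine ⟨g, hg, hg.fwdDiff.eq_of_natCast hh fun m => ?_⟩
  show g (m + 1) - g m = h m
  rw [← Nat.cast_succ, hgG, hgG]
  simp only [G, Nat.succ_eq_add_one, sum_range_succ, add_sub_cancel_left]

/-- Explicit form of transitive T-functions: `f(x) = 1 + x + 2 (g(x+1) - g(x))`. -/
theorem transitive_explicit_form (f : ℤ_[2] → ℤ_[2]) (hf : OneLip f) :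
    TransitiveT f ↔
      ∃ g : ℤ_[2] → ℤ_[2], OneLip g ∧
        ∀ x : ℤ_[2], f x = 1 + x + 2 * (g (x + 1) - g x) := by
  constructor
  · intro htrans
    have hT : ∀ n, TransMod f n := fun n =>
      n.eq_zero_or_pos.elim (fun hn => hn ▸ TransMod.zero f) (htrans n)
    have hstep := fun n => (hT n).iterate_two_pow_congMod hf (hT (n + 1))
    obtain ⟨h, hh, hfh⟩ := exists_oneLip_eq_one_add_add_two_mul hf hstep
    obtain ⟨g, hg, rfl⟩ := exists_oneLip_fwdDiff_eq hh fun n =>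
      ((hT n).iterate_two_pow_congMod_iff hfh hh 0).mp (hstep n 0)
    exact ⟨g, hg, hfh⟩
  · rintro ⟨g, hg, hfg⟩ n -
    induction n with
    | zero => exact TransMod.zero f
    | succ n ih =>
      exact ih.succ fun x =>
        (ih.iterate_two_pow_congMod_iff hfg hg.fwdDiff x).mpr (hg.sum_range_fwdDiff_congMod n)
end

section
/- (Chain rule for iterates.) Let f : ℤ₂ → ℤ₂ be a 1-Lipschitz map and let g : ℤ₂ → ℤ₂ be a derivative of f modulo 2^M with parameter K. Then for every i ≥ 1 the function x ↦ ∏_{j=0}^{i−1} g(f^[j](x)) is a derivative of the i-th iterate f^[i] modulo 2^M with parameter K; that is, for all x, h ∈ ℤ₂ with ‖h‖ ≤ 2^(−K) one has ‖f^[i](x+h) − f^[i](x) − (∏_{j=0}^{i−1} g(f^[j](x)))·h‖ ≤ 2^(−M)·‖h‖. -/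
open Function Finset

theorem OneLip.iterate_s12 {f : ℤ_[2] → ℤ_[2]} (hf : OneLip f) (n : ℕ) : OneLip f^[n] := by
  induction n with
  | zero => intro a b; simp
  | succ n ih =>
    intro a b
    rw [iterate_succ_apply', iterate_succ_apply']
    exact (hf _ _).trans (ih a b)

theorem isDerivMod_id (M K : ℕ) : IsDerivMod id (fun _ => 1) M K := by
  intro x h _
  simp only [id, add_sub_cancel_left, one_mul, sub_self, norm_zero]
  positivity

/- The error of the composite is the outer error at the increment `f₁ (x + h) - f₁ x`, which is
no longer than `h`, plus `g₂ (f₁ x)` times the inner error; as `‖g₂ (f₁ x)‖ ≤ 1`, the ultrametric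
inequality bounds the sum by the larger of the two bounds, with no loss in the constant. -/
theorem IsDerivMod.comp {f₁ f₂ g₁ g₂ : ℤ_[2] → ℤ_[2]} {M K : ℕ}
    (h₂ : IsDerivMod f₂ g₂ M K) (h₁ : IsDerivMod f₁ g₁ M K) (hf₁ : OneLip f₁) :
    IsDerivMod (f₂ ∘ f₁) (fun x => g₂ (f₁ x) * g₁ x) M K := by
  intro x h hh
  set y := f₁ x
  set h' := f₁ (x + h) - y
  have hh' : ‖h'‖ ≤ ‖h‖ := by simpa using hf₁ (x + h) x
  have outer : ‖f₂ (y + h') - f₂ y - g₂ y * h'‖ ≤ ((2 : ℝ) ^ M)⁻¹ * ‖h‖ :=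
    (h₂ y h' (hh'.trans hh)).trans (by gcongr)
  have inner : ‖g₂ y * (h' - g₁ x * h)‖ ≤ ((2 : ℝ) ^ M)⁻¹ * ‖h‖ := by
    rw [norm_mul]
    exact (mul_le_of_le_one_left (norm_nonneg _) (PadicInt.norm_le_one _)).trans (h₁ x h hh)
  have split : f₂ (f₁ (x + h)) - f₂ y - g₂ y * g₁ x * h =
      (f₂ (y + h') - f₂ y - g₂ y * h') + g₂ y * (h' - g₁ x * h) := by
    simp only [h', add_sub_cancel]; ring
  change ‖f₂ (f₁ (x + h)) - f₂ y - g₂ y * g₁ x * h‖ ≤ _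
  rw [split]
  exact (PadicInt.nonarchimedean _ _).trans (max_le outer inner)

theorem IsDerivMod.iterate_s12 {f g : ℤ_[2] → ℤ_[2]} {M K : ℕ} (hf : OneLip f)
    (hg : IsDerivMod f g M K) (i : ℕ) :
    IsDerivMod (f^[i]) (fun x => ∏ j ∈ range i, g (f^[j] x)) M K := by
  induction i with
  | zero => simpa using isDerivMod_id M K
  | succ n ih =>
    simp_rw [iterate_succ', prod_range_succ, mul_comm _ (g _)]
    exact hg.comp ih (hf.iterate_s12 n)

/-- Chain rule for iterates: the product of derivatives along the orbit is a derivative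
modulo `2^M` of the iterate. -/
theorem chain_rule_iterates (f g : ℤ_[2] → ℤ_[2]) (M K : ℕ)
    (hf : OneLip f) (hg : IsDerivMod f g M K) :
    ∀ i : ℕ, 1 ≤ i →
      IsDerivMod (f^[i]) (fun x => ∏ j ∈ Finset.range i, g (f^[j] x)) M K :=
  fun i _ => hg.iterate_s12 hf i
end

section
/- Let f : ℤ₂ → ℤ₂ be a 1-Lipschitz map and let g : ℤ₂ → ℤ₂ be a derivative of f modulo 8 with parameter K. If x, x' ∈ ℤ₂ satisfy x ≡ x' (mod 2^K), then for every i ≥ 0 one has ∏_{j=0}^{i−1} g(f^[j](x)) ≡ ∏_{j=0}^{i−1} g(f^[j](x')) (mod 8), i.e. ‖∏_{j=0}^{i−1} g(f^[j](x)) − ∏_{j=0}^{i−1} g(f^[j](x'))‖ ≤ 2^(−3). -/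
open Function Finset

/-! Iterates of a 1-Lipschitz map send points congruent modulo `2^K` to points congruent modulo
`2^K`, and at such points a derivative modulo `8` with parameter `K` takes values congruent
modulo `8`: subtracting the linearisations at the two points along a step of norm exactly `2^-K`
leaves `(g x' - g x) · 2^K` with norm at most `2^-3 · 2^-K`. Congruences modulo `8` multiply. -/

open IsUltrametricDist

theorem congMod_iff_sModEq {s : ℕ} {a b : ℤ_[2]} :
    CongMod s a b ↔ a ≡ b [SMOD (Ideal.span {(2 : ℤ_[2]) ^ s})] := by
  have := PadicInt.norm_le_pow_iff_mem_span_pow (p := 2) (a - b) s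
  rw [zpow_neg, zpow_natCast, Nat.cast_ofNat, Nat.cast_ofNat] at this
  rw [CongMod, this, SModEq.sub_mem]

theorem CongMod.prod {ι : Type*} {s : ℕ} {t : Finset ι} {a b : ι → ℤ_[2]}
    (h : ∀ i ∈ t, CongMod s (a i) (b i)) : CongMod s (∏ i ∈ t, a i) (∏ i ∈ t, b i) :=
  congMod_iff_sModEq.2 <| SModEq.prod fun i hi => congMod_iff_sModEq.1 (h i hi)

theorem OneLip.congMod_iterate {f : ℤ_[2] → ℤ_[2]} (hf : OneLip f) {s : ℕ} {x x' : ℤ_[2]}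
    (h : CongMod s x x') (n : ℕ) : CongMod s (f^[n] x) (f^[n] x') := by
  induction n with
  | zero => exact h
  | succ n ih =>
    rw [iterate_succ_apply', iterate_succ_apply']
    exact (hf _ _).trans ih

theorem IsDerivMod.congMod {f g : ℤ_[2] → ℤ_[2]} {M K : ℕ} (hg : IsDerivMod f g M K)
    {x x' : ℤ_[2]} (h : CongMod K x x') : CongMod M (g x) (g x') := by
  set ε : ℝ := ((2 : ℝ) ^ K)⁻¹
  set t : ℤ_[2] := 2 ^ K
  set d : ℤ_[2] := x' - x
  have ht : ‖t‖ = ε := by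
    simpa [t, ε] using PadicInt.norm_p_pow (p := 2) K
  have hd : ‖d‖ ≤ ε := by rw [norm_sub_rev]; exact h
  have hdt : ‖d + t‖ ≤ ε := (PadicInt.nonarchimedean _ _).trans (max_le hd ht.le)
  set E : ℤ_[2] → ℤ_[2] → ℤ_[2] := fun y k => f (y + k) - f y - g y * k
  have hE : ∀ y k, ‖k‖ ≤ ε → ‖E y k‖ ≤ ((2 : ℝ) ^ M)⁻¹ * ε := fun y k hk =>
    (hg y k hk).trans (mul_le_mul_of_nonneg_left hk (by positivity))
  have key : (g x' - g x) * t = E x (d + t) + -E x d + -E x' t := by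
    simp only [E, d, ← add_assoc, add_sub_cancel]
    ring
  have hbound : ‖g x' - g x‖ * ε ≤ ((2 : ℝ) ^ M)⁻¹ * ε := by
    calc ‖g x' - g x‖ * ε = ‖E x (d + t) + -E x d + -E x' t‖ := by
          rw [← key, norm_mul, ht]
      _ ≤ _ :=
          (norm_add_le_max _ _).trans (max_le ((norm_add_le_max _ _).trans (max_le ?_ ?_)) ?_)
    exacts [hE _ _ hdt, norm_neg (E x d) ▸ hE _ _ hd, norm_neg (E x' t) ▸ hE _ _ ht.le]
  rw [CongMod, norm_sub_rev]
  exact le_of_mul_le_mul_right hbound (by positivity)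

/-- The derivative of the `i`-th iterate modulo 8 depends on the point only
modulo `2^K`. -/
theorem iterate_deriv_congr (f g : ℤ_[2] → ℤ_[2]) (K : ℕ)
    (hf : OneLip f) (hg : IsDerivMod f g 3 K) (x x' : ℤ_[2]) (hxx' : CongMod K x x') :
    ∀ i : ℕ,
      ‖(∏ j ∈ Finset.range i, g (f^[j] x)) -
        ∏ j ∈ Finset.range i, g (f^[j] x')‖ ≤ ((2 : ℝ) ^ (3 : ℕ))⁻¹ :=
  fun _ => CongMod.prod fun j _ => hg.congMod (hf.congMod_iterate hxx' j)
end

section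
/- Let k ≥ 1, let u : ℤ₂ → ℤ₂ be a 1-Lipschitz map, let v : ℤ → ℤ be any function, and let σ, ε ∈ ℤ. Define f : ℤ₂ → ℤ₂ by f(x) = u(r_k(x)) + (x − r_k(x)) + 2^k·((σ − ε)·v(r_k(x)) + ε), where r_k(x) ∈ {0,…,2^k−1} is the residue of x modulo 2^k (viewed in ℤ₂). Then f is 1-Lipschitz, and for every M ∈ ℕ the constant function 1 is a derivative of f modulo 2^M with parameter k; indeed f(x + 2^k·r) = f(x) + 2^k·r for all x, r ∈ ℤ₂. -/
open Function Finset

/-! Apart from the summand `x`, the map `f` depends only on `x.appr k`, i.e. on `x` mod `2^k`;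
hence `f (x + h) = f x + h` whenever `‖h‖ ≤ 2^(-k)`. For `‖a - b‖ > 2^(-k)` every summand of `f`
is 1-Lipschitz at `a, b`: `‖a.appr k - b.appr k‖ ≤ ‖a - b‖` by the ultrametric inequality, since
both `a.appr k` and `b.appr k` lie within `2^(-k)` of `a` and `b`, and the term `2^k * (…)` moves
by at most `2^(-k)`. -/

namespace PadicInt

variable {p : ℕ} [Fact p.Prime]

theorem appr_eq_val_toZModPow (x : ℤ_[p]) (n : ℕ) : x.appr n = (toZModPow n x).val :=
  (ZMod.val_natCast_of_lt (x.appr_lt n)).symm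

theorem norm_le_pow_inv_iff_mem_span_pow (x : ℤ_[p]) (n : ℕ) :
    ‖x‖ ≤ ((p : ℝ) ^ n)⁻¹ ↔ x ∈ Ideal.span {(p : ℤ_[p]) ^ n} := by
  rw [← zpow_natCast, ← zpow_neg, norm_le_pow_iff_mem_span_pow]

theorem appr_add_of_norm_le {n : ℕ} (x : ℤ_[p]) {h : ℤ_[p]} (hh : ‖h‖ ≤ ((p : ℝ) ^ n)⁻¹) :
    (x + h).appr n = x.appr n := by
  have h0 : toZModPow n h = 0 := by
    rwa [← RingHom.mem_ker, ker_toZModPow, ← norm_le_pow_inv_iff_mem_span_pow]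
  rw [appr_eq_val_toZModPow, appr_eq_val_toZModPow, map_add, h0, add_zero]

theorem norm_sub_appr_le (x : ℤ_[p]) (n : ℕ) : ‖x - x.appr n‖ ≤ ((p : ℝ) ^ n)⁻¹ :=
  (norm_le_pow_inv_iff_mem_span_pow _ n).mpr (x.appr_spec n)

theorem norm_pow_mul_le (n : ℕ) (r : ℤ_[p]) : ‖(p : ℤ_[p]) ^ n * r‖ ≤ ((p : ℝ) ^ n)⁻¹ :=
  (norm_le_pow_inv_iff_mem_span_pow _ n).mpr
    (Ideal.mul_mem_right _ _ (Ideal.mem_span_singleton_self _))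

theorem appr_eq_of_norm_sub_le {n : ℕ} {a b : ℤ_[p]} (h : ‖a - b‖ ≤ ((p : ℝ) ^ n)⁻¹) :
    a.appr n = b.appr n := by
  simpa using appr_add_of_norm_le b h

theorem norm_appr_sub_appr_le (a b : ℤ_[p]) (n : ℕ) :
    ‖(a.appr n : ℤ_[p]) - b.appr n‖ ≤ ‖a - b‖ := by
  rcases le_or_gt ‖a - b‖ ((p : ℝ) ^ n)⁻¹ with hab | hab
  · simp [appr_eq_of_norm_sub_le hab]
  · have hsplit : (a.appr n : ℤ_[p]) - b.appr n = -(a - a.appr n) + (a - b) + (b - b.appr n) := by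
      ring
    rw [hsplit]
    refine (IsUltrametricDist.norm_add_le_max _ _).trans
      (max_le ?_ ((norm_sub_appr_le b n).trans hab.le))
    refine (IsUltrametricDist.norm_add_le_max _ _).trans (max_le ?_ le_rfl)
    exact (norm_neg _).trans_le ((norm_sub_appr_le a n).trans hab.le)

end PadicInt

namespace OneLip

theorem id : OneLip id := fun _ _ => le_rfl

theorem comp {f g : ℤ_[2] → ℤ_[2]} (hf : OneLip f) (hg : OneLip g) : OneLip (f ∘ g) :=
  fun a b => (hf (g a) (g b)).trans (hg a b)

theorem add {f g : ℤ_[2] → ℤ_[2]} (hf : OneLip f) (hg : OneLip g) : OneLip (f + g) := fun a b => by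
  rw [Pi.add_apply, Pi.add_apply, add_sub_add_comm]
  exact (IsUltrametricDist.norm_add_le_max _ _).trans (max_le (hf a b) (hg a b))

theorem sub {f g : ℤ_[2] → ℤ_[2]} (hf : OneLip f) (hg : OneLip g) : OneLip (f - g) := fun a b => by
  rw [Pi.sub_apply, Pi.sub_apply, sub_sub_sub_comm, sub_eq_add_neg]
  exact (IsUltrametricDist.norm_add_le_max _ _).trans
    (max_le (hf a b) ((norm_neg _).trans_le (hg a b)))

end OneLip

theorem oneLip_appr (k : ℕ) : OneLip fun x => (x.appr k : ℤ_[2]) :=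
  fun a b => PadicInt.norm_appr_sub_appr_le a b k

theorem oneLip_two_pow_mul_comp_appr (k : ℕ) (c : ℕ → ℤ_[2]) :
    OneLip fun x => 2 ^ k * c (x.appr k) := fun a b => by
  rcases le_or_gt ‖a - b‖ ((2 : ℝ) ^ k)⁻¹ with hab | hab
  · simp [PadicInt.appr_eq_of_norm_sub_le (p := 2) (by exact_mod_cast hab)]
  · rw [← mul_sub]
    refine le_trans ?_ hab.le
    exact_mod_cast PadicInt.norm_pow_mul_le (p := 2) k _

theorem tsc_function_unif_diff_general (k : ℕ) (u : ℤ_[2] → ℤ_[2]) (hu : OneLip u)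
    (v : ℤ → ℤ) (σ ε : ℤ) (f : ℤ_[2] → ℤ_[2])
    (hfdef : ∀ x : ℤ_[2],
      f x = u ((x.appr k : ℤ_[2])) + (x - (x.appr k : ℤ_[2])) +
        2 ^ k * (((σ - ε) * v (x.appr k) + ε : ℤ) : ℤ_[2])) :
    OneLip f ∧ (∀ M : ℕ, IsDerivMod f (fun _ => 1) M k) ∧
      ∀ x r : ℤ_[2], f (x + 2 ^ k * r) = f x + 2 ^ k * r := by
  have hshift : ∀ x h : ℤ_[2], ‖h‖ ≤ ((2 : ℝ) ^ k)⁻¹ → f (x + h) = f x + h := fun x h hh => by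
    rw [hfdef, hfdef, PadicInt.appr_add_of_norm_le (p := 2) x (by exact_mod_cast hh)]
    ring
  refine ⟨?_, fun M x h hh => ?_, fun x r => hshift x _ ?_⟩
  · obtain rfl : f = _ := funext hfdef
    exact ((hu.comp (oneLip_appr k)).add (OneLip.id.sub (oneLip_appr k))).add
      (oneLip_two_pow_mul_comp_appr k fun n => (((σ - ε) * v n + ε : ℤ) : ℤ_[2]))
  · rw [hshift x h hh, one_mul, add_sub_cancel_left, sub_self, norm_zero]
    positivity
  · exact_mod_cast PadicInt.norm_pow_mul_le (p := 2) k r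

/-- The TSC-style T-function is 1-Lipschitz and uniformly differentiable with
derivative identically 1 (indeed `f(x + 2^k r) = f(x) + 2^k r`). -/
theorem tsc_function_unif_diff (k : ℕ) (hk : 1 ≤ k) (u : ℤ_[2] → ℤ_[2]) (hu : OneLip u)
    (v : ℤ → ℤ) (σ ε : ℤ) (f : ℤ_[2] → ℤ_[2])
    (hfdef : ∀ x : ℤ_[2],
      f x = u ((x.appr k : ℤ_[2])) + (x - (x.appr k : ℤ_[2])) +
        2 ^ k * (((σ - ε) * v (x.appr k) + ε : ℤ) : ℤ_[2])) :
    OneLip f ∧ (∀ M : ℕ, IsDerivMod f (fun _ => 1) M k) ∧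
      ∀ x r : ℤ_[2], f (x + 2 ^ k * r) = f x + 2 ^ k * r :=
  tsc_function_unif_diff_general k u hu v σ ε f hfdef
end
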